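/- arXiv:2106.14956 — 5 statements merged into one kernel-verified Lean document; each statement's English description precedes it below -/
import Mathlib

section
/- Let k ≥ 1, d ≥ 1, let v_0, …, v_{k−1} ∈ ℝ^d, let α ∈ [0, 1/2) with αk ∈ ℕ, and let H ⊆ {0,…,k−1} with |H| ≥ (1−α)k. Let v̄_H = (1/|H|) Σ_{i∈H} v_i and suppose max_{i∈H} ‖v_i − v̄_H‖_∞ ≤ r. Let v_med ∈ ℝ^d be a coordinatewise median of the v_i, i.e., for every coordinate j ∈ {1,…,d}, at least k/2 of the indices i satisfy [v_i]_j ≤ [v_med]_j and at least k/2 of the indices satisfy [v_i]_j ≥ [v_med]_j. For each coordinate j let N_j ⊆ {0,…,k−1} satisfy |N_j| = (1−α)k and |[v_i − v_med]_j| ≤ |[v_{i'} − v_med]_j| for all i ∈ N_j and all i' ∉ N_j, and define the robust mean estimate v̂ ∈ ℝ^d coordinatewise by [v̂]_j = (1/((1−α)k)) Σ_{i∈N_j} [v_i]_j. Then ‖v̂ − v̄_H‖ ≤ (2α/(1−α)) (1 + √((1−α)²/(1−2α))) · r · √d. -/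
/-!
Work one coordinate at a time. Since `|H| ≥ (1-α)k > k/2`, both halves of the median condition
meet `H`, so the median lies between two trusted values and is within `r` of `v̄_H`. A kept
untrusted point is no farther from the median than some dropped trusted point, hence within `3r`
of `v̄_H`. The trusted deviations from `v̄_H` sum to zero, so the trimmed sum of deviations is the
sum over at most `αk` kept untrusted points minus the sum over at most `αk` dropped trusted ones,
at most `4αkr` in absolute value. This gives `4α/(1-α) · r` per coordinate, and the stated
constant is larger because `(1-α)² ≥ 1-2α`.
-/

open Finset

theorem EuclideanSpace.norm_le_mul_sqrt_card_of_forall_abs_le {ι : Type*} [Fintype ι]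
    (x : EuclideanSpace ℝ ι) {B : ℝ} (h : ∀ i, |x i| ≤ B) :
    ‖x‖ ≤ B * √(Fintype.card ι) := by
  cases isEmpty_or_nonempty ι with
  | inl _ => simp [EuclideanSpace.norm_eq]
  | inr hι =>
    have hB : 0 ≤ B := (abs_nonneg _).trans (h hι.some)
    calc ‖x‖ = √(∑ i, |x i| ^ 2) := by simp [EuclideanSpace.norm_eq]
      _ ≤ √(∑ _i : ι, B ^ 2) := by gcongr with i; exact h i
      _ = B * √(Fintype.card ι) := by
        rw [sum_const, card_univ, nsmul_eq_mul, Real.sqrt_mul (Nat.cast_nonneg _),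
          Real.sqrt_sq hB, mul_comm]

theorem four_mul_div_le_two_mul_div_mul_one_add_sqrt {α : ℝ} (hα0 : 0 ≤ α) (hα : α < 1 / 2) :
    4 * α / (1 - α) ≤ 2 * α / (1 - α) * (1 + √((1 - α) ^ 2 / (1 - 2 * α))) := by
  have hone : 1 ≤ √((1 - α) ^ 2 / (1 - 2 * α)) := by
    rw [Real.one_le_sqrt, one_le_div (by linarith)]
    nlinarith
  have : 0 ≤ 2 * α / (1 - α) := div_nonneg (by linarith) (by linarith)
  calc 4 * α / (1 - α) = 2 * α / (1 - α) * (1 + 1) := by ring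
    _ ≤ _ := by gcongr

section TrimmedMean

variable {ι : Type*} [DecidableEq ι] (x : ι → ℝ) {H N : Finset ι} {c m r : ℝ}

theorem abs_sub_le_three_mul_of_mem_sdiff
    (hH : ∀ i ∈ H, |x i - c| ≤ r) (hm : |m - c| ≤ r) (hcard : #N ≤ #H)
    (hnear : ∀ i ∈ N, ∀ i' ∉ N, |x i - m| ≤ |x i' - m|) {i : ι} (hi : i ∈ N \ H) :
    |x i - c| ≤ 3 * r := by
  obtain ⟨i', hi'⟩ : (H \ N).Nonempty := card_pos.mp <|
    (card_pos.mpr ⟨i, hi⟩).trans_le (card_sdiff_le_card_sdiff_iff.mpr hcard)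
  rw [mem_sdiff] at hi hi'
  calc |x i - c| ≤ |x i - m| + |m - c| := abs_sub_le _ _ _
    _ ≤ |x i' - m| + r := add_le_add (hnear i hi.1 i' hi'.2) hm
    _ ≤ (|x i' - c| + |c - m|) + r := by gcongr; exact abs_sub_le _ _ _
    _ ≤ 3 * r := by rw [abs_sub_comm c m]; linarith [hH i' hi'.1]

variable [Fintype ι]

theorem abs_sub_le_of_card_lt_card_add_card
    (hH : ∀ i ∈ H, |x i - c| ≤ r)
    (hle : Fintype.card ι < #{i | x i ≤ m} + #H) (hge : Fintype.card ι < #{i | m ≤ x i} + #H) :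
    |m - c| ≤ r := by
  obtain ⟨i, hi⟩ := inter_nonempty_of_card_lt_card_add_card (subset_univ _) (subset_univ _)
    (card_univ (α := ι) ▸ hle)
  obtain ⟨i', hi'⟩ := inter_nonempty_of_card_lt_card_add_card (subset_univ _) (subset_univ _)
    (card_univ (α := ι) ▸ hge)
  simp only [mem_inter, mem_filter, mem_univ, true_and] at hi hi'
  rw [abs_le]
  constructor <;> linarith [(abs_le.mp (hH i hi.2)).1, (abs_le.mp (hH i' hi'.2)).2, hi.1, hi'.1]

theorem abs_sum_sub_le_four_mul_card_compl
    (hr : 0 ≤ r) (hH : ∀ i ∈ H, |x i - c| ≤ r) (hsum : ∑ i ∈ H, (x i - c) = 0)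
    (hm : |m - c| ≤ r) (hcard : #N ≤ #H)
    (hnear : ∀ i ∈ N, ∀ i' ∉ N, |x i - m| ≤ |x i' - m|) :
    |∑ i ∈ N, (x i - c)| ≤ 4 * #Nᶜ * r := by
  have hNH : #(N \ H) ≤ #Nᶜ := calc
    #(N \ H) ≤ #Hᶜ := card_le_card fun i hi => mem_compl.mpr (mem_sdiff.mp hi).2
    _ ≤ #Nᶜ := by rw [card_compl, card_compl]; omega
  have hHN : #(H \ N) ≤ #Nᶜ := card_le_card fun i hi => mem_compl.mpr (mem_sdiff.mp hi).2
  have hsplit := sum_sdiff_sub_sum_sdiff (s₁ := H) (s₂ := N) (f := fun i => x i - c)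
  rw [hsum, sub_zero] at hsplit
  calc |∑ i ∈ N, (x i - c)|
      ≤ |∑ i ∈ N \ H, (x i - c)| + |∑ i ∈ H \ N, (x i - c)| := hsplit ▸ abs_sub _ _
    _ ≤ #(N \ H) * (3 * r) + #(H \ N) * r := by
      gcongr
      · exact (abs_sum_le_sum_abs _ _).trans <| (sum_le_card_nsmul _ _ _ fun i hi =>
          abs_sub_le_three_mul_of_mem_sdiff x hH hm hcard hnear hi).trans_eq (nsmul_eq_mul _ _)
      · exact (abs_sum_le_sum_abs _ _).trans <| (sum_le_card_nsmul _ _ _ fun i hi =>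
          hH i (mem_sdiff.mp hi).1).trans_eq (nsmul_eq_mul _ _)
    _ ≤ #Nᶜ * (3 * r) + #Nᶜ * r := by gcongr
    _ = 4 * #Nᶜ * r := by ring

theorem abs_trimmed_mean_sub_mean_le [Nonempty ι] {α : ℝ} (hα : α < 1 / 2)
    (hH : (1 - α) * Fintype.card ι ≤ #H) (hc : c = (#H : ℝ)⁻¹ * ∑ i ∈ H, x i)
    (hr : ∀ i ∈ H, |x i - c| ≤ r)
    (hle : (Fintype.card ι : ℝ) / 2 ≤ #{i | x i ≤ m})
    (hge : (Fintype.card ι : ℝ) / 2 ≤ #{i | m ≤ x i})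
    (hN : (#N : ℝ) = (1 - α) * Fintype.card ι)
    (hnear : ∀ i ∈ N, ∀ i' ∉ N, |x i - m| ≤ |x i' - m|) :
    |1 / ((1 - α) * Fintype.card ι) * ∑ i ∈ N, x i - c| ≤
      2 * α / (1 - α) * (1 + √((1 - α) ^ 2 / (1 - 2 * α))) * r := by
  set k : ℝ := (Fintype.card ι : ℝ)
  have hk : 0 < k := Nat.cast_pos.mpr Fintype.card_pos
  have h1α : 0 < 1 - α := by linarith
  have hNpos : 0 < (1 - α) * k := mul_pos h1α hk
  have hHpos : (0 : ℝ) < #H := hNpos.trans_le hH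
  obtain ⟨i₀, hi₀⟩ : H.Nonempty := card_pos.mp (by exact_mod_cast hHpos)
  have hr0 : 0 ≤ r := (abs_nonneg _).trans (hr i₀ hi₀)
  have hsum : ∑ i ∈ H, (x i - c) = 0 := by
    rw [sum_sub_distrib, sum_const, nsmul_eq_mul, hc, mul_inv_cancel_left₀ hHpos.ne', sub_self]
  have hmajority : k < k / 2 + (1 - α) * k := by nlinarith
  have hm : |m - c| ≤ r := abs_sub_le_of_card_lt_card_add_card x hr
    (Nat.cast_lt.mp (by push_cast; exact hmajority.trans_le (add_le_add hle hH)))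
    (Nat.cast_lt.mp (by push_cast; exact hmajority.trans_le (add_le_add hge hH)))
  have hcompl : (#Nᶜ : ℝ) = α * k := by
    rw [card_compl, Nat.cast_sub (card_le_univ N), hN]
    ring
  have hα0 : 0 ≤ α := nonneg_of_mul_nonneg_left (hcompl ▸ Nat.cast_nonneg _) hk
  have hbound := abs_sum_sub_le_four_mul_card_compl x hr0 hr hsum hm
    (by exact_mod_cast hN.trans_le hH) hnear
  have hmean : 1 / ((1 - α) * k) * ∑ i ∈ N, x i - c = (∑ i ∈ N, (x i - c)) / ((1 - α) * k) := by
    rw [sum_sub_distrib, sum_const, nsmul_eq_mul, hN]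
    field_simp
  calc |1 / ((1 - α) * k) * ∑ i ∈ N, x i - c|
      = |∑ i ∈ N, (x i - c)| / ((1 - α) * k) := by rw [hmean, abs_div, abs_of_pos hNpos]
    _ ≤ 4 * (α * k) * r / ((1 - α) * k) := by
        gcongr
        exact hcompl ▸ hbound
    _ = 4 * α / (1 - α) * r := by field_simp
    _ ≤ _ := by gcongr; exact four_mul_div_le_two_mul_div_mul_one_add_sqrt hα0 hα

end TrimmedMean

theorem robust_mean_estimator_bound_general
    (k d : ℕ) (hk : 1 ≤ k)
    (v : Fin k → EuclideanSpace ℝ (Fin d))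
    (α : ℝ) (hα2 : α < 1 / 2)
    (H : Finset (Fin k)) (hH : (1 - α) * k ≤ (H.card : ℝ))
    (vbar : EuclideanSpace ℝ (Fin d))
    (hvbar : vbar = (H.card : ℝ)⁻¹ • ∑ i ∈ H, v i)
    (r : ℝ)
    (hr : ∀ i ∈ H, ∀ j : Fin d, |v i j - vbar j| ≤ r)
    (vmed : EuclideanSpace ℝ (Fin d))
    (hmed_le : ∀ j : Fin d,
      (k : ℝ) / 2 ≤ ((Finset.univ.filter fun i => v i j ≤ vmed j).card : ℝ))
    (hmed_ge : ∀ j : Fin d,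
      (k : ℝ) / 2 ≤ ((Finset.univ.filter fun i => vmed j ≤ v i j).card : ℝ))
    (Nset : Fin d → Finset (Fin k))
    (hNcard : ∀ j : Fin d, ((Nset j).card : ℝ) = (1 - α) * k)
    (hNnear : ∀ j : Fin d, ∀ i ∈ Nset j, ∀ i' ∉ Nset j,
      |v i j - vmed j| ≤ |v i' j - vmed j|)
    (vhat : EuclideanSpace ℝ (Fin d))
    (hvhat : ∀ j : Fin d, vhat j = (1 / ((1 - α) * k)) * ∑ i ∈ Nset j, v i j) :
    ‖vhat - vbar‖ ≤
      (2 * α / (1 - α)) * (1 + Real.sqrt ((1 - α) ^ 2 / (1 - 2 * α))) * r * Real.sqrt d := by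
  have : Nonempty (Fin k) := ⟨⟨0, hk⟩⟩
  have hcard : (Fintype.card (Fin k) : ℝ) = k := by rw [Fintype.card_fin]
  have hcoord (j : Fin d) : |vhat j - vbar j| ≤
      2 * α / (1 - α) * (1 + √((1 - α) ^ 2 / (1 - 2 * α))) * r := by
    have hvbar_j : vbar j = (H.card : ℝ)⁻¹ * ∑ i ∈ H, v i j := by
      simp [hvbar, WithLp.ofLp_sum]
    rw [hvhat j, ← hcard]
    exact abs_trimmed_mean_sub_mean_le (fun i => v i j) hα2 (hcard ▸ hH) hvbar_j (hr · · j)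
      (hcard ▸ hmed_le j) (hcard ▸ hmed_ge j) (hcard ▸ hNcard j) (hNnear j)
  simpa using EuclideanSpace.norm_le_mul_sqrt_card_of_forall_abs_le (vhat - vbar) hcoord

/-- Guarantee for the median-based robust mean estimator (Proposition 1 of the paper):
the mean of the `(1-α)k` nearest neighbors (per coordinate) of the coordinatewise median
is close to the mean of the trustworthy vectors. -/
theorem robust_mean_estimator_bound
    (k d : ℕ) (hk : 1 ≤ k) (hd : 1 ≤ d)
    (v : Fin k → EuclideanSpace ℝ (Fin d))
    (α : ℝ) (hα0 : 0 ≤ α) (hα2 : α < 1 / 2)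
    (hαk : ∃ a : ℕ, (a : ℝ) = α * k)
    (H : Finset (Fin k)) (hH : (1 - α) * k ≤ (H.card : ℝ))
    (vbar : EuclideanSpace ℝ (Fin d))
    (hvbar : vbar = (H.card : ℝ)⁻¹ • ∑ i ∈ H, v i)
    (r : ℝ)
    (hr : ∀ i ∈ H, ∀ j : Fin d, |v i j - vbar j| ≤ r)
    (vmed : EuclideanSpace ℝ (Fin d))
    (hmed_le : ∀ j : Fin d,
      (k : ℝ) / 2 ≤ ((Finset.univ.filter fun i => v i j ≤ vmed j).card : ℝ))
    (hmed_ge : ∀ j : Fin d,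
      (k : ℝ) / 2 ≤ ((Finset.univ.filter fun i => vmed j ≤ v i j).card : ℝ))
    (Nset : Fin d → Finset (Fin k))
    (hNcard : ∀ j : Fin d, ((Nset j).card : ℝ) = (1 - α) * k)
    (hNnear : ∀ j : Fin d, ∀ i ∈ Nset j, ∀ i' ∉ Nset j,
      |v i j - vmed j| ≤ |v i' j - vmed j|)
    (vhat : EuclideanSpace ℝ (Fin d))
    (hvhat : ∀ j : Fin d, vhat j = (1 / ((1 - α) * k)) * ∑ i ∈ Nset j, v i j) :
    ‖vhat - vbar‖ ≤
      (2 * α / (1 - α)) * (1 + Real.sqrt ((1 - α) ^ 2 / (1 - 2 * α))) * r * Real.sqrt d :=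
  robust_mean_estimator_bound_general k d hk v α hα2 H hH vbar hvbar r hr vmed hmed_le hmed_ge Nset
    hNcard hNnear vhat hvhat
end

section
/- Fix integers n ≥ 1, m' ≥ 1, m ≥ 1, d ≥ 1 and reals L ≥ 0, γ ≥ 0, C₁ ≥ 0, C₂ ≥ 0. Let T be a finite index set with |T| = n, and for each i ∈ T let T_i be a finite set of time indices with |T_i| = m'. Let t be a distinguished time index and let {x_τ}_{τ ∈ {t} ∪ ⋃_i T_i} ⊆ ℝ^d satisfy ‖x_τ − x_{τ'}‖ ≤ γ(m−1) for all such indices τ, τ'. For each i ∈ T and τ ∈ T_i let G_{i,τ} : ℝ^d → ℝ^d be L-Lipschitz, set ḡ_i = (1/m') Σ_{τ∈T_i} G_{i,τ}(x_τ), and let g* ∈ ℝ^d with g* ≠ 0. Suppose vectors ĝ_i ∈ ℝ^d (i ∈ T) satisfy ‖ĝ_i − ḡ_i‖ ≤ C₁ · max_{τ∈T_i} ‖G_{i,τ}(x_τ) − ḡ_i‖_∞, and suppose ĝĝ ∈ ℝ^d with ĝĝ ≠ 0 satisfies ‖ĝĝ − (1/n) Σ_{i∈T} ĝ_i‖ ≤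 C₂ · max_{i∈T} ‖ĝ_i − (1/n) Σ_{j∈T} ĝ_j‖_∞. Then ‖ g*/‖g*‖ − ĝĝ/‖ĝĝ‖ ‖ ≤ (2/‖g*‖) · [ Lγ(m−1)(1 + C₁ + 2C₂(C₁+1)) + ‖ g* − (1/(m'n)) Σ_{i∈T} Σ_{τ∈T_i} G_{i,τ}(x_t) ‖ + 2C₂ max_{i∈T} ‖ (1/m') Σ_{τ∈T_i} G_{i,τ}(x_t) − g* ‖_∞ + (C₁/n) Σ_{i∈T} max_{τ,τ'∈T_i} ‖ G_{i,τ}(x_{τ'}) − G_{i,τ'}(x_{τ'}) ‖_∞ + 2C₂C₁ max_{i∈T, τ,τ'∈T_i} ‖ G_{i,τ}(x_{τ'}) − G_{i,τ'}(x_{τ'}) ‖_∞ ]. -/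
/-- The sup (coordinatewise max) norm of a vector of `ℝ^d`. -/
noncomputable def supNorm {d : ℕ} (v : EuclideanSpace ℝ (Fin d)) : ℝ :=
  ‖(WithLp.equiv 2 (Fin d → ℝ)) v‖

/-!
Normalization is `2 / ‖g*‖`-Lipschitz at `g*`, so it suffices to bound `‖g* - ĝĝ‖`, splitting it
through the mean of the per-agent averages at `x_t` and the mean of the `ĝ_i`. Lipschitz continuity
and the diameter bound on the iterates make every change of evaluation point cost `L γ (m - 1)`.
Hence each `G_{i,τ}(x_τ)` lies within `L γ (m - 1) + D_i` of `ḡ_i` in the sup norm, where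
`D_i = max_{τ,τ'} ‖G_{i,τ}(x_{τ'}) - G_{i,τ'}(x_{τ'})‖_∞`; this is what `C₁` multiplies. All `ĝ_i`
then lie within a common sup-norm distance `R` of `g*`, hence within `2 R` of their mean; this is
what `C₂` multiplies.
-/

open Finset

lemma norm_inv_norm_smul_sub_inv_norm_smul_le {E : Type*} [NormedAddCommGroup E]
    [NormedSpace ℝ E] {a : E} (ha : a ≠ 0) (b : E) :
    ‖‖a‖⁻¹ • a - ‖b‖⁻¹ • b‖ ≤ 2 / ‖a‖ * ‖a - b‖ := by
  have ha' : 0 < ‖a‖ := norm_pos_iff.mpr ha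
  have hrescale : ‖(‖a‖⁻¹ - ‖b‖⁻¹) • b‖ ≤ ‖a‖⁻¹ * ‖a - b‖ := by
    rcases eq_or_ne b 0 with rfl | hb
    · simpa using by positivity
    have hb' : 0 < ‖b‖ := norm_pos_iff.mpr hb
    calc ‖(‖a‖⁻¹ - ‖b‖⁻¹) • b‖ = ‖a‖⁻¹ * |‖b‖ - ‖a‖| := by
          rw [norm_smul, Real.norm_eq_abs, inv_sub_inv ha'.ne' hb'.ne', abs_div,
            abs_of_pos (mul_pos ha' hb')]
          field_simp
      _ ≤ ‖a‖⁻¹ * ‖a - b‖ := by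
          rw [norm_sub_rev a b]
          gcongr
          exact abs_norm_sub_norm_le b a
  calc ‖‖a‖⁻¹ • a - ‖b‖⁻¹ • b‖ = ‖‖a‖⁻¹ • (a - b) + (‖a‖⁻¹ - ‖b‖⁻¹) • b‖ := by
        congr 1; module
    _ ≤ ‖a‖⁻¹ * ‖a - b‖ + ‖a‖⁻¹ * ‖a - b‖ := by
        refine (norm_add_le _ _).trans (add_le_add (le_of_eq ?_) hrescale)
        rw [norm_smul, Real.norm_of_nonneg (by positivity)]
    _ = 2 / ‖a‖ * ‖a - b‖ := by ring

section Average

variable {ι E : Type*} [AddCommGroup E] [Module ℝ E] {s : Finset ι}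

lemma sub_inv_card_smul_sum (hs : s.Nonempty) (c : E) (f : ι → E) :
    c - (#s : ℝ)⁻¹ • ∑ i ∈ s, f i = (#s : ℝ)⁻¹ • ∑ i ∈ s, (c - f i) := by
  have hcard : (#s : ℝ) ≠ 0 := by exact_mod_cast hs.card_pos.ne'
  rw [sum_sub_distrib, smul_sub, sum_const, ← Nat.cast_smul_eq_nsmul ℝ, smul_smul,
    inv_mul_cancel₀ hcard, one_smul]

namespace Seminorm

variable (p : Seminorm ℝ E)

lemma map_sub_le_map_sub_add_map_sub (a b c : E) : p (a - c) ≤ p (a - b) + p (b - c) := by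
  simpa using map_add_le_add p (a - b) (b - c)

lemma map_inv_card_smul_sum_le (f : ι → E) :
    p ((#s : ℝ)⁻¹ • ∑ i ∈ s, f i) ≤ (#s : ℝ)⁻¹ * ∑ i ∈ s, p (f i) := by
  rw [map_smul_eq_mul, Real.norm_of_nonneg (by positivity)]
  gcongr
  exact le_sum_of_subadditive p (map_zero p).le (map_add_le_add p) s f

variable {p}

lemma map_inv_card_smul_sum_le_of_le (hs : s.Nonempty) {f : ι → E} {B : ℝ}
    (h : ∀ i ∈ s, p (f i) ≤ B) : p ((#s : ℝ)⁻¹ • ∑ i ∈ s, f i) ≤ B := by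
  refine (p.map_inv_card_smul_sum_le f).trans ?_
  rw [inv_mul_le_iff₀ (by exact_mod_cast hs.card_pos), ← nsmul_eq_mul]
  exact sum_le_card_nsmul s _ B h

lemma map_inv_card_smul_sum_sub_le (hs : s.Nonempty) {f g : ι → E} {B : ℝ}
    (h : ∀ i ∈ s, p (f i - g i) ≤ B) :
    p ((#s : ℝ)⁻¹ • ∑ i ∈ s, f i - (#s : ℝ)⁻¹ • ∑ i ∈ s, g i) ≤ B := by
  rw [← smul_sub, ← sum_sub_distrib]
  exact map_inv_card_smul_sum_le_of_le hs h

lemma map_sub_inv_card_smul_sum_le (hs : s.Nonempty) {c : E} {f : ι → E} {B : ℝ}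
    (h : ∀ i ∈ s, p (c - f i) ≤ B) : p (c - (#s : ℝ)⁻¹ • ∑ i ∈ s, f i) ≤ B := by
  rw [sub_inv_card_smul_sum hs]
  exact map_inv_card_smul_sum_le_of_le hs h

lemma map_sub_inv_card_smul_sum_le_two_mul (hs : s.Nonempty) {c : E} {f : ι → E} {B : ℝ}
    (h : ∀ i ∈ s, p (f i - c) ≤ B) {i : ι} (hi : i ∈ s) :
    p (f i - (#s : ℝ)⁻¹ • ∑ j ∈ s, f j) ≤ 2 * B := by
  have hc : p (c - (#s : ℝ)⁻¹ • ∑ j ∈ s, f j) ≤ B :=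
    map_sub_inv_card_smul_sum_le hs fun j hj => map_sub_rev p c (f j) ▸ h j hj
  linarith [p.map_sub_le_map_sub_add_map_sub (f i) c ((#s : ℝ)⁻¹ • ∑ j ∈ s, f j), h i hi]

lemma map_diag_sub_inv_card_smul_sum_diag_le {F : ι → ι → E} {A D : ℝ}
    (hA : ∀ i ∈ s, ∀ j ∈ s, p (F i i - F i j) ≤ A) (hD : ∀ i ∈ s, ∀ j ∈ s, p (F i j - F j j) ≤ D)
    {i : ι} (hi : i ∈ s) : p (F i i - (#s : ℝ)⁻¹ • ∑ j ∈ s, F j j) ≤ A + D :=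
  map_sub_inv_card_smul_sum_le ⟨i, hi⟩ fun j hj =>
    (p.map_sub_le_map_sub_add_map_sub _ (F i j) _).trans (add_le_add (hA i hi j hj) (hD i hi j hj))

end Seminorm

end Average

section RobustAggregation

variable {ι E : Type*} [SeminormedAddCommGroup E] [NormedSpace ℝ E] {p : Seminorm ℝ E}

theorem norm_sub_robust_aggregate_le (hp : ∀ v, p v ≤ ‖v‖) {T : Finset ι} (hT : T.Nonempty)
    {h gbar ghat : ι → E} {gstar gg : E} {A C₁ C₂ S Dmax : ℝ} {D : ι → ℝ}
    (hC₁ : 0 ≤ C₁) (hC₂ : 0 ≤ C₂)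
    (hdrift : ∀ i ∈ T, ‖gbar i - h i‖ ≤ A)
    (hrobust : ∀ i ∈ T, ‖ghat i - gbar i‖ ≤ C₁ * (A + D i))
    (hS : ∀ i ∈ T, p (h i - gstar) ≤ S) (hD : ∀ i ∈ T, D i ≤ Dmax)
    (hgg : ‖gg - (#T : ℝ)⁻¹ • ∑ i ∈ T, ghat i‖ ≤
      C₂ * T.sup' hT fun i => p (ghat i - (#T : ℝ)⁻¹ • ∑ j ∈ T, ghat j)) :
    ‖gstar - gg‖ ≤ A * (1 + C₁ + 2 * C₂ * (C₁ + 1)) + ‖gstar - (#T : ℝ)⁻¹ • ∑ i ∈ T, h i‖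
      + 2 * C₂ * S + C₁ / #T * ∑ i ∈ T, D i + 2 * C₂ * C₁ * Dmax := by
  have hdev : ∀ i ∈ T, p (ghat i - gstar) ≤ C₁ * (A + Dmax) + A + S := fun i hi => by
    have := mul_le_mul_of_nonneg_left (add_le_add_left (hD i hi) A) hC₁
    linarith [p.map_sub_le_map_sub_add_map_sub (ghat i) (gbar i) gstar,
      p.map_sub_le_map_sub_add_map_sub (gbar i) (h i) gstar, hp (ghat i - gbar i),
      hp (gbar i - h i), hrobust i hi, hdrift i hi, hS i hi]
  have hagg : ‖gg - (#T : ℝ)⁻¹ • ∑ i ∈ T, ghat i‖ ≤ C₂ * (2 * (C₁ * (A + Dmax) + A + S)) :=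
    hgg.trans <| mul_le_mul_of_nonneg_left
      (sup'_le _ _ fun i hi => Seminorm.map_sub_inv_card_smul_sum_le_two_mul hT hdev hi) hC₂
  have hmid : ‖(#T : ℝ)⁻¹ • ∑ i ∈ T, h i - (#T : ℝ)⁻¹ • ∑ i ∈ T, ghat i‖
      ≤ A + C₁ * A + C₁ / #T * ∑ i ∈ T, D i := by
    rw [← smul_sub, ← sum_sub_distrib]
    refine ((normSeminorm ℝ E).map_inv_card_smul_sum_le _).trans ?_
    calc (#T : ℝ)⁻¹ * ∑ i ∈ T, ‖h i - ghat i‖ ≤ (#T : ℝ)⁻¹ * ∑ i ∈ T, (A + C₁ * A + C₁ * D i) := by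
          gcongr with i hi
          linarith [norm_sub_le_norm_sub_add_norm_sub (h i) (gbar i) (ghat i),
            norm_sub_rev (h i) (gbar i), norm_sub_rev (gbar i) (ghat i), hdrift i hi, hrobust i hi]
      _ = A + C₁ * A + C₁ / #T * ∑ i ∈ T, D i := by
          have : (#T : ℝ) ≠ 0 := by exact_mod_cast hT.card_pos.ne'
          rw [sum_add_distrib, sum_const, nsmul_eq_mul, ← mul_sum]
          field_simp
  calc ‖gstar - gg‖ ≤ ‖gstar - (#T : ℝ)⁻¹ • ∑ i ∈ T, h i‖
        + ‖(#T : ℝ)⁻¹ • ∑ i ∈ T, h i - (#T : ℝ)⁻¹ • ∑ i ∈ T, ghat i‖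
        + ‖gg - (#T : ℝ)⁻¹ • ∑ i ∈ T, ghat i‖ := by
        rw [norm_sub_rev gg]
        exact norm_sub_le_norm_sub_add_norm_sub _ _ _ |>.trans
          (add_le_add_left (norm_sub_le_norm_sub_add_norm_sub _ _ _) _)
    _ ≤ _ := by linear_combination hmid + hagg

end RobustAggregation

noncomputable def supNormSeminorm (d : ℕ) : Seminorm ℝ (EuclideanSpace ℝ (Fin d)) :=
  (normSeminorm ℝ (Fin d → ℝ)).comp (WithLp.linearEquiv 2 ℝ (Fin d → ℝ)).toLinearMap

lemma supNorm_le_norm {d : ℕ} (v : EuclideanSpace ℝ (Fin d)) : supNorm v ≤ ‖v‖ :=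
  pi_norm_le_iff_of_nonneg (norm_nonneg v) |>.mpr fun i => PiLp.norm_apply_le v i

/-- Deterministic error bound on the difference of normalized directions between the
true gradient `g*` and the robust aggregate `ĝĝ` of temporally robustified gradients
(Lemma 2 of the paper). -/
theorem normalized_robust_aggregate_error_bound
    {ι J : Type*}
    (n m' m d : ℕ) (hn : 1 ≤ n) (hm' : 1 ≤ m')
    (L γ C₁ C₂ : ℝ) (hL : 0 ≤ L) (hC₁ : 0 ≤ C₁) (hC₂ : 0 ≤ C₂)
    (T : Finset ι) (hT : T.card = n)
    (Ti : ι → Finset J) (hTi : ∀ i, (Ti i).card = m')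
    (t : J) (x : J → EuclideanSpace ℝ (Fin d))
    (hx : ∀ τ τ' : J, (τ = t ∨ ∃ i ∈ T, τ ∈ Ti i) → (τ' = t ∨ ∃ i ∈ T, τ' ∈ Ti i) →
      ‖x τ - x τ'‖ ≤ γ * ((m : ℝ) - 1))
    (G : ι → J → EuclideanSpace ℝ (Fin d) → EuclideanSpace ℝ (Fin d))
    (hG : ∀ i ∈ T, ∀ τ ∈ Ti i, ∀ y z, ‖G i τ y - G i τ z‖ ≤ L * ‖y - z‖)
    (gbar : ι → EuclideanSpace ℝ (Fin d))
    (hgbar : ∀ i, gbar i = (m' : ℝ)⁻¹ • ∑ τ ∈ Ti i, G i τ (x τ))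
    (gstar : EuclideanSpace ℝ (Fin d)) (hgstar : gstar ≠ 0)
    (ghat : ι → EuclideanSpace ℝ (Fin d))
    (hghat : ∀ i ∈ T, ‖ghat i - gbar i‖ ≤
      C₁ * (Ti i).sup' (Finset.card_pos.mp (by rw [hTi i]; exact hm'))
        fun τ => supNorm (G i τ (x τ) - gbar i))
    (gg : EuclideanSpace ℝ (Fin d))
    (hgg : ‖gg - (n : ℝ)⁻¹ • ∑ i ∈ T, ghat i‖ ≤
      C₂ * T.sup' (Finset.card_pos.mp (by rw [hT]; exact hn))
        fun i => supNorm (ghat i - (n : ℝ)⁻¹ • ∑ j ∈ T, ghat j)) :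
    ‖‖gstar‖⁻¹ • gstar - ‖gg‖⁻¹ • gg‖ ≤ (2 / ‖gstar‖) *
      (L * γ * ((m : ℝ) - 1) * (1 + C₁ + 2 * C₂ * (C₁ + 1))
      + ‖gstar - ((m' : ℝ) * (n : ℝ))⁻¹ • ∑ i ∈ T, ∑ τ ∈ Ti i, G i τ (x t)‖
      + 2 * C₂ * T.sup' (Finset.card_pos.mp (by rw [hT]; exact hn))
          (fun i => supNorm ((m' : ℝ)⁻¹ • ∑ τ ∈ Ti i, G i τ (x t) - gstar))
      + (C₁ / (n : ℝ)) * ∑ i ∈ T,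
          ((Ti i) ×ˢ (Ti i)).sup'
            ((Finset.card_pos.mp (by rw [hTi i]; exact hm')).product
              (Finset.card_pos.mp (by rw [hTi i]; exact hm')))
            (fun p => supNorm (G i p.1 (x p.2) - G i p.2 (x p.2)))
      + 2 * C₂ * C₁ * T.sup' (Finset.card_pos.mp (by rw [hT]; exact hn))
          (fun i => ((Ti i) ×ˢ (Ti i)).sup'
            ((Finset.card_pos.mp (by rw [hTi i]; exact hm')).product
              (Finset.card_pos.mp (by rw [hTi i]; exact hm')))
            (fun p => supNorm (G i p.1 (x p.2) - G i p.2 (x p.2))))) := by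
  subst hT
  have hTine : ∀ i, (Ti i).Nonempty := fun i => card_pos.mp (by rw [hTi i]; exact hm')
  have hmean : ∀ i (f : J → EuclideanSpace ℝ (Fin d)),
      (m' : ℝ)⁻¹ • ∑ τ ∈ Ti i, f τ = (#(Ti i) : ℝ)⁻¹ • ∑ τ ∈ Ti i, f τ := by
    simp [hTi]
  have hcenter : ((m' : ℝ) * #T)⁻¹ • ∑ i ∈ T, ∑ τ ∈ Ti i, G i τ (x t)
      = (#T : ℝ)⁻¹ • ∑ i ∈ T, (m' : ℝ)⁻¹ • ∑ τ ∈ Ti i, G i τ (x t) := by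
    rw [← smul_sum, smul_smul, mul_inv, mul_comm]
  simp only [hcenter, hmean] at hgbar hghat ⊢
  set A := L * γ * ((m : ℝ) - 1)
  set D : ι → ℝ := fun i => ((Ti i) ×ˢ (Ti i)).sup' ((hTine i).product (hTine i))
    fun p => supNorm (G i p.1 (x p.2) - G i p.2 (x p.2))
  have hLip : ∀ i ∈ T, ∀ τ ∈ Ti i, ∀ σ, (σ = t ∨ ∃ j ∈ T, σ ∈ Ti j) →
      ‖G i τ (x τ) - G i τ (x σ)‖ ≤ A := fun i hi τ hτ σ hσ =>
    (hG i hi τ hτ _ _).trans <|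
      (mul_le_mul_of_nonneg_left (hx τ σ (.inr ⟨i, hi, hτ⟩) hσ) hL).trans_eq (mul_assoc L γ _).symm
  have hdrift : ∀ i ∈ T, ‖gbar i - (#(Ti i) : ℝ)⁻¹ • ∑ τ ∈ Ti i, G i τ (x t)‖ ≤ A := by
    intro i hi
    rw [hgbar i]
    exact (normSeminorm ℝ _).map_inv_card_smul_sum_sub_le (f := fun τ => G i τ (x τ))
      (hTine i) fun τ hτ => hLip i hi τ hτ t (.inl rfl)
  have hrobust : ∀ i ∈ T, ‖ghat i - gbar i‖ ≤ C₁ * (A + D i) := by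
    intro i hi
    refine (hghat i hi).trans (mul_le_mul_of_nonneg_left (sup'_le _ _ fun τ hτ => ?_) hC₁)
    rw [hgbar i]
    exact (supNormSeminorm d).map_diag_sub_inv_card_smul_sum_diag_le
      (F := fun τ σ => G i τ (x σ))
      (fun τ hτ σ hσ => (supNorm_le_norm _).trans (hLip i hi τ hτ σ (.inr ⟨i, hi, hσ⟩)))
      (fun τ hτ σ hσ => le_sup' (fun p : J × J => supNorm (G i p.1 (x p.2) - G i p.2 (x p.2)))
        (mk_mem_product hτ hσ)) hτ
  calc _ ≤ 2 / ‖gstar‖ * ‖gstar - gg‖ := norm_inv_norm_smul_sub_inv_norm_smul_le hgstar gg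
    _ ≤ _ := by
      gcongr
      refine norm_sub_robust_aggregate_le (p := supNormSeminorm d) supNorm_le_norm _ hC₁ hC₂
        hdrift hrobust (fun i hi => ?_) (fun i hi => le_sup' D hi) hgg
      exact le_sup' (fun i => supNorm ((#(Ti i) : ℝ)⁻¹ • ∑ τ ∈ Ti i, G i τ (x t) - gstar)) hi
end

section
/- Let 0 < p_b ≤ p_t < 1 and let M be the 2×2 matrix with first row (1−p_b, p_b) and second row (p_t, 1−p_t). Let π = (π(0), π(1)) with π(0), π(1) ≥ 0 and π(0) + π(1) = 1, let m₀ be a nonnegative integer, and set q = π M^{m₀}. Then q(0)² / (p_t/(p_b+p_t)) + q(1)² / (p_b/(p_b+p_t)) ≤ 1 + (1−p_b−p_t)^{2m₀} · p_t/p_b, with equality when π = (0, 1). -/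
/-!
Writing `π* = (π₀, π₁)` for the stationary distribution and `λ = 1 - p_b - p_t`, the distribution
after `m` steps is `π* + λ^m c (1, -1)` with `c = π(0) - π₀`, because `(1, -1)` is a left
eigenvector of `M` for the eigenvalue `λ`. Since `π₀ + π₁ = 1`, the squared density equals
`1 + λ^{2m} c² / (π₀ π₁)`, and `p_b ≤ p_t` gives `-π₀ ≤ c ≤ π₁ ≤ π₀`, so `c² ≤ π₀²`, with
equality at `π = (0, 1)`.
-/

open Matrix

section TwoStateChain

variable {K : Type*} [Field K]

lemma vecMul_twoState_add (a b : K) (v : Fin 2 → K) :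
    (v ᵥ* !![1 - a, a; b, 1 - b]) 0 + (v ᵥ* !![1 - a, a; b, 1 - b]) 1 = v 0 + v 1 := by
  simp only [vecMul, dotProduct, Fin.sum_univ_two, of_apply, cons_val_zero, cons_val_one]
  ring

lemma vecMul_twoState_pow_add (a b : K) (v : Fin 2 → K) (m : ℕ) :
    (v ᵥ* !![1 - a, a; b, 1 - b] ^ m) 0 + (v ᵥ* !![1 - a, a; b, 1 - b] ^ m) 1 = v 0 + v 1 := by
  induction m with
  | zero => simp
  | succ m ih => rw [pow_succ, ← vecMul_vecMul, vecMul_twoState_add, ih]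

lemma vecMul_twoState_apply_zero {a b : K} (hab : a + b ≠ 0) {v : Fin 2 → K}
    (hv : v 0 + v 1 = 1) :
    (v ᵥ* !![1 - a, a; b, 1 - b]) 0 = b / (a + b) + (1 - a - b) * (v 0 - b / (a + b)) := by
  simp only [vecMul, dotProduct, Fin.sum_univ_two, of_apply, cons_val_zero, cons_val_one]
  field_simp
  linear_combination (a + b) * b * hv

lemma vecMul_twoState_pow_apply_zero {a b : K} (hab : a + b ≠ 0) {v : Fin 2 → K}
    (hv : v 0 + v 1 = 1) (m : ℕ) :
    (v ᵥ* !![1 - a, a; b, 1 - b] ^ m) 0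
      = b / (a + b) + (1 - a - b) ^ m * (v 0 - b / (a + b)) := by
  induction m with
  | zero => simp
  | succ m ih =>
    rw [pow_succ, ← vecMul_vecMul,
      vecMul_twoState_apply_zero hab ((vecMul_twoState_pow_add a b v m).trans hv), ih]
    ring

lemma two_point_density_sq_eq {π₀ π₁ : K} (h₀ : π₀ ≠ 0) (h₁ : π₁ ≠ 0)
    (hπ : π₀ + π₁ = 1) (x : K) :
    (π₀ + x) ^ 2 / π₀ + (π₁ - x) ^ 2 / π₁ = 1 + x ^ 2 / (π₀ * π₁) := by
  field_simp
  linear_combination (π₀ * π₁ + x ^ 2) * hπ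

end TwoStateChain

theorem two_state_markov_density_bound_general
    (p_b p_t : ℝ) (hpb0 : 0 < p_b) (hbt : p_b ≤ p_t)
    (M : Matrix (Fin 2) (Fin 2) ℝ)
    (hM : M = !![1 - p_b, p_b; p_t, 1 - p_t])
    (pv : Fin 2 → ℝ) (hpv0 : 0 ≤ pv 0) (hpv1 : 0 ≤ pv 1) (hpv : pv 0 + pv 1 = 1)
    (m₀ : ℕ)
    (q : Fin 2 → ℝ) (hq : q = pv ᵥ* (M ^ m₀)) :
    q 0 ^ 2 / (p_t / (p_b + p_t)) + q 1 ^ 2 / (p_b / (p_b + p_t)) ≤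
        1 + (1 - p_b - p_t) ^ (2 * m₀) * p_t / p_b ∧
    (pv = ![0, 1] →
      q 0 ^ 2 / (p_t / (p_b + p_t)) + q 1 ^ 2 / (p_b / (p_b + p_t)) =
        1 + (1 - p_b - p_t) ^ (2 * m₀) * p_t / p_b) := by
  have hs : 0 < p_b + p_t := by linarith
  have hq0 := vecMul_twoState_pow_apply_zero hs.ne' hpv m₀
  have hq1 := vecMul_twoState_pow_add p_b p_t pv m₀
  rw [← hM, ← hq] at hq0 hq1
  set π₀ := p_t / (p_b + p_t)
  set π₁ := p_b / (p_b + p_t)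
  set c := pv 0 - π₀
  set L := (1 - p_b - p_t) ^ m₀
  have hπ₀ : 0 < π₀ := div_pos (hpb0.trans_le hbt) hs
  have hπ₁ : 0 < π₁ := div_pos hpb0 hs
  have hπ : π₀ + π₁ = 1 := by rw [← add_div, add_comm, div_self hs.ne']
  replace hq1 : q 1 = π₁ - L * c := by linarith
  have hrhs : (1 - p_b - p_t) ^ (2 * m₀) * p_t / p_b = L ^ 2 * π₀ ^ 2 / (π₀ * π₁) := by
    simp only [L, π₀, π₁]
    rw [pow_mul']
    field_simp
  rw [hq0, hq1, two_point_density_sq_eq hπ₀.ne' hπ₁.ne' hπ, hrhs, mul_pow]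
  refine ⟨?_, fun hpv_eq => ?_⟩
  · have hc : c ^ 2 ≤ π₀ ^ 2 := by
      have hπ₁₀ : π₁ ≤ π₀ := div_le_div_of_nonneg_right hbt hs.le
      apply sq_le_sq' <;> linarith
    gcongr
  · have hc : c = -π₀ := by simp [c, hpv_eq]
    rw [hc, neg_sq]

/-- Bound on the squared L²(π*)-density of the `m₀`-step distribution of the two-state
Markov chain relative to its stationary distribution `π* = (p_t/(p_b+p_t), p_b/(p_b+p_t))`,
by `K(m₀)² = 1 + (1-p_b-p_t)^{2m₀} p_t/p_b`, with equality for `π = (0,1)`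
(proof of Lemma 1 of the paper). -/
theorem two_state_markov_density_bound
    (p_b p_t : ℝ) (hpb0 : 0 < p_b) (hbt : p_b ≤ p_t) (hpt1 : p_t < 1)
    (M : Matrix (Fin 2) (Fin 2) ℝ)
    (hM : M = !![1 - p_b, p_b; p_t, 1 - p_t])
    (pv : Fin 2 → ℝ) (hpv0 : 0 ≤ pv 0) (hpv1 : 0 ≤ pv 1) (hpv : pv 0 + pv 1 = 1)
    (m₀ : ℕ)
    (q : Fin 2 → ℝ) (hq : q = pv ᵥ* (M ^ m₀)) :
    q 0 ^ 2 / (p_t / (p_b + p_t)) + q 1 ^ 2 / (p_b / (p_b + p_t)) ≤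
        1 + (1 - p_b - p_t) ^ (2 * m₀) * p_t / p_b ∧
    (pv = ![0, 1] →
      q 0 ^ 2 / (p_t / (p_b + p_t)) + q 1 ^ 2 / (p_b / (p_b + p_t)) =
        1 + (1 - p_b - p_t) ^ (2 * m₀) * p_t / p_b) :=
  two_state_markov_density_bound_general p_b p_t hpb0 hbt M hM pv hpv0 hpv1 hpv m₀ q hq
end

section
/- Let X ⊆ ℝ^d be nonempty, closed and convex, let F : ℝ^d → ℝ be differentiable, μ-strongly convex and L-smooth (with 0 < μ ≤ L), and let x* ∈ X satisfy ∇F(x*) = 0. Set κ = L/μ. Let γ > 0, let x ∈ X with ∇F(x) ≠ 0, let ĝ ∈ ℝ^d with ĝ ≠ 0, let Z ∈ {0,1}, let x₊ = Π_X( x − γ ĝ/‖ĝ‖ ) where Π_X denotes the metric projection onto X, and let e = ∇F(x)/‖∇F(x)‖ − ĝ/‖ĝ‖. Then ‖x₊ − x*‖² ≤ ‖x − x*‖² − (2γ/κ)(1 − Z(1+κ)) ‖x − x*‖ + 2γ(1−Z) ‖e‖ ‖x − x*‖ + γ². -/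
open scoped RealInnerProductSpace

/-- Per-iteration inequality of the normalized projected update (key inequality in the
proof of Theorem 1 of the paper): for the metric projection `x₊ = Π_X(x - γ ĝ/‖ĝ‖)`,
`‖x₊ - x*‖² ≤ ‖x - x*‖² - (2γ/κ)(1 - Z(1+κ))‖x - x*‖ + 2γ(1-Z)‖e‖‖x - x*‖ + γ²`. -/
theorem normalized_projected_update_per_iteration
    {d : ℕ}
    (X : Set (EuclideanSpace ℝ (Fin d)))
    (hXne : X.Nonempty) (hXclosed : IsClosed X) (hXconv : Convex ℝ X)
    (F : EuclideanSpace ℝ (Fin d) → ℝ)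
    (G : EuclideanSpace ℝ (Fin d) → EuclideanSpace ℝ (Fin d))
    (hF : ∀ y, HasGradientAt F (G y) y)
    (μ L : ℝ) (hμ : 0 < μ) (hμL : μ ≤ L)
    (hsmooth : ∀ y z, ‖G y - G z‖ ≤ L * ‖y - z‖)
    (hstrong : ∀ y z, μ * ‖y - z‖ ^ 2 ≤ ⟪G y - G z, y - z⟫)
    (xstar : EuclideanSpace ℝ (Fin d)) (hxstarX : xstar ∈ X) (hxstar : G xstar = 0)
    (κ : ℝ) (hκ : κ = L / μ)
    (γ : ℝ) (hγ : 0 < γ)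
    (x : EuclideanSpace ℝ (Fin d)) (hxX : x ∈ X) (hGx : G x ≠ 0)
    (g : EuclideanSpace ℝ (Fin d)) (hg : g ≠ 0)
    (Z : ℝ) (hZ : Z = 0 ∨ Z = 1)
    (xplus : EuclideanSpace ℝ (Fin d)) (hxplusX : xplus ∈ X)
    (hproj : ∀ y ∈ X, ‖xplus - (x - γ • ‖g‖⁻¹ • g)‖ ≤ ‖y - (x - γ • ‖g‖⁻¹ • g)‖)
    (e : EuclideanSpace ℝ (Fin d)) (he : e = ‖G x‖⁻¹ • G x - ‖g‖⁻¹ • g) :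
    ‖xplus - xstar‖ ^ 2 ≤ ‖x - xstar‖ ^ 2
        - (2 * γ / κ) * (1 - Z * (1 + κ)) * ‖x - xstar‖
        + 2 * γ * (1 - Z) * ‖e‖ * ‖x - xstar‖ + γ ^ 2 := by
  have hL : 0 < L := lt_of_lt_of_le hμ hμL
  have hκpos : 0 < κ := hκ ▸ div_pos hL hμ
  set w : EuclideanSpace ℝ (Fin d) := ‖g‖⁻¹ • g with hw
  set p : EuclideanSpace ℝ (Fin d) := x - γ • w with hp
  set a : EuclideanSpace ℝ (Fin d) := x - xstar with ha
  have hwnorm : ‖w‖ = 1 := by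
    rw [hw, norm_smul, norm_inv, norm_norm, inv_mul_cancel₀ (norm_ne_zero_iff.mpr hg)]
  -- variational inequality and nonexpansiveness
  have hvar : ⟪p - xplus, xstar - xplus⟫ ≤ 0 := by
    haveI : Nonempty X := hXne.to_subtype
    have hbdd : BddBelow (Set.range fun y : X => ‖p - y‖) := by
      refine ⟨0, ?_⟩
      rintro b ⟨y, rfl⟩
      exact norm_nonneg _
    have hinf : ‖p - xplus‖ = ⨅ y : X, ‖p - y‖ := by
      apply le_antisymm
      · apply le_ciInf
        rintro ⟨y, hy⟩
        simpa [norm_sub_rev p] using hproj y hy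
      · exact ciInf_le hbdd ⟨xplus, hxplusX⟩
    exact (norm_eq_iInf_iff_real_inner_le_zero hXconv hxplusX).mp hinf xstar hxstarX
  have step1 : ‖xplus - xstar‖ ^ 2 ≤ ‖p - xstar‖ ^ 2 := by
    have hsplit : ‖p - xstar‖ ^ 2
        = ‖p - xplus‖ ^ 2 + 2 * ⟪p - xplus, xplus - xstar⟫ + ‖xplus - xstar‖ ^ 2 := by
      have := norm_add_sq_real (p - xplus) (xplus - xstar)
      simpa [sub_add_sub_cancel] using this
    have hneg : ⟪p - xplus, xplus - xstar⟫ = -⟪p - xplus, xstar - xplus⟫ := by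
      rw [← inner_neg_right]; congr 1; abel
    nlinarith [sq_nonneg ‖p - xplus‖]
  -- expand the square
  have step2 : ‖p - xstar‖ ^ 2 = ‖a‖ ^ 2 - 2 * γ * ⟪a, w⟫ + γ ^ 2 := by
    have hpa : p - xstar = a - γ • w := by rw [hp, ha]; abel
    rw [hpa, norm_sub_sq_real, real_inner_smul_right, norm_smul, Real.norm_eq_abs,
      abs_of_pos hγ, hwnorm]
    ring
  -- basic facts
  have hxne : x ≠ xstar := fun h => hGx (h ▸ hxstar ▸ h ▸ rfl)
  have hD : 0 < ‖a‖ := by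
    rw [ha, norm_pos_iff]; exact sub_ne_zero_of_ne hxne
  have hGnorm : 0 < ‖G x‖ := norm_pos_iff.mpr hGx
  have hsm : ‖G x‖ ≤ L * ‖a‖ := by
    have := hsmooth x xstar; rw [hxstar, sub_zero] at this; exact this
  have hst : μ * ‖a‖ ^ 2 ≤ ⟪G x, a⟫ := by
    have := hstrong x xstar; rw [hxstar, sub_zero] at this; exact this
  have hcore : ‖a‖ / κ ≤ ⟪a, ‖G x‖⁻¹ • G x⟫ := by
    rw [real_inner_smul_right, real_inner_comm, hκ, div_div_eq_mul_div,
      inv_mul_eq_div, div_le_div_iff₀ hL hGnorm]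
    nlinarith [mul_le_mul_of_nonneg_left hsm (mul_nonneg hμ.le hD.le),
      mul_le_mul_of_nonneg_left hst hL.le]
  rcases hZ with hZ0 | hZ1
  · subst hZ0
    have hwe : w = ‖G x‖⁻¹ • G x - e := by rw [he]; abel
    have hiae : ⟪a, e⟫ ≤ ‖a‖ * ‖e‖ := real_inner_le_norm a e
    have hlow : ‖a‖ / κ - ‖a‖ * ‖e‖ ≤ ⟪a, w⟫ := by
      rw [hwe, inner_sub_right]; exact sub_le_sub hcore hiae
    have hmul := mul_le_mul_of_nonneg_left hlow (by positivity : (0:ℝ) ≤ 2 * γ)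
    calc ‖xplus - xstar‖ ^ 2 ≤ ‖a‖ ^ 2 - 2 * γ * ⟪a, w⟫ + γ ^ 2 := by
          rw [← step2]; exact step1
      _ ≤ ‖a‖ ^ 2 - 2 * γ * (‖a‖ / κ - ‖a‖ * ‖e‖) + γ ^ 2 := by linarith
      _ = ‖a‖ ^ 2 - (2 * γ / κ) * (1 - 0 * (1 + κ)) * ‖a‖
            + 2 * γ * (1 - 0) * ‖e‖ * ‖a‖ + γ ^ 2 := by ring
  · subst hZ1
    have hcs : -‖a‖ ≤ ⟪a, w⟫ := by
      have := real_inner_le_norm a (-w)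
      rw [inner_neg_right, norm_neg, hwnorm, mul_one] at this
      linarith
    have hrw : (2 * γ / κ) * (1 - 1 * (1 + κ)) * ‖a‖ = -(2 * γ * ‖a‖) := by
      field_simp
      ring
    have hmul := mul_le_mul_of_nonneg_left hcs (by positivity : (0:ℝ) ≤ 2 * γ)
    calc ‖xplus - xstar‖ ^ 2 ≤ ‖a‖ ^ 2 - 2 * γ * ⟪a, w⟫ + γ ^ 2 := by
          rw [← step2]; exact step1
      _ ≤ ‖a‖ ^ 2 - (2 * γ / κ) * (1 - 1 * (1 + κ)) * ‖a‖
            + 2 * γ * (1 - 1) * ‖e‖ * ‖a‖ + γ ^ 2 := by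
          rw [hrw]; linarith
end

section
/- Let F : ℝ^d → ℝ be differentiable with L-Lipschitz gradient ∇F. Let γ > 0, let x ∈ ℝ^d with ∇F(x) ≠ 0, let ĝ ∈ ℝ^d with ĝ ≠ 0, let Z ∈ {0,1}, set x₊ = x − γ ĝ/‖ĝ‖, and let e = ∇F(x)/‖∇F(x)‖ − ĝ/‖ĝ‖. Then F(x₊) − F(x) ≤ −γ(1 − 2Z) ‖∇F(x)‖ + γ(1−Z) ‖∇F(x)‖ ‖e‖ + Lγ²/2. -/
/-!
Along the segment from `x` to `y`, the function
`t ↦ F (x + t • (y - x)) - t ⟪∇F x, y - x⟫ - (L / 2) t² ‖y - x‖²` has nonpositive derivative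
for `t ≥ 0` by Cauchy–Schwarz and the Lipschitz bound on the gradient; comparing `t = 0` and
`t = 1` gives the descent lemma. For `y = x - γ u` with the unit vector `u = ĝ / ‖ĝ‖` it then
remains to bound `⟪∇F x, u⟫` from below: by `-‖∇F x‖` (Cauchy–Schwarz) on a corrupted step, and
by `‖∇F x‖ - ‖∇F x‖ ‖e‖` otherwise, since `u = ∇F x / ‖∇F x‖ - e`.
-/

section

variable {E : Type*} [NormedAddCommGroup E] [InnerProductSpace ℝ E]

theorem sub_norm_mul_norm_inv_smul_sub_le_inner (a u : E) :
    ‖a‖ - ‖a‖ * ‖‖a‖⁻¹ • a - u‖ ≤ inner ℝ a u := by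
  have hself : inner ℝ a (‖a‖⁻¹ • a) = ‖a‖ := by
    rw [real_inner_smul_right, real_inner_self_eq_norm_mul_norm, ← mul_assoc, inv_mul_mul_self]
  calc ‖a‖ - ‖a‖ * ‖‖a‖⁻¹ • a - u‖ ≤ ‖a‖ - inner ℝ a (‖a‖⁻¹ • a - u) := by
        gcongr; exact real_inner_le_norm _ _
    _ = inner ℝ a u := by rw [inner_sub_right, hself, sub_sub_cancel]

variable [CompleteSpace E] {F : E → ℝ}

theorem HasGradientAt.hasDerivAt_comp_add_smul {g x v : E} {t : ℝ}
    (h : HasGradientAt F g (x + t • v)) :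
    HasDerivAt (fun s : ℝ => F (x + s • v)) (inner ℝ g v) t := by
  have hline : HasDerivAt (fun s : ℝ => x + s • v) v t := by
    simpa using ((hasDerivAt_id t).smul_const v).const_add x
  exact h.hasFDerivAt.comp_hasDerivAt t hline

theorem sub_le_inner_add_of_lipschitz_gradient {G : E → E} (hF : ∀ y, HasGradientAt F (G y) y)
    {L : ℝ} (hG : ∀ y z, ‖G y - G z‖ ≤ L * ‖y - z‖) (x y : E) :
    F y - F x ≤ inner ℝ (G x) (y - x) + L / 2 * ‖y - x‖ ^ 2 := by
  set v := y - x
  set ψ : ℝ → ℝ := fun t => F (x + t • v) - t * inner ℝ (G x) v - L / 2 * t ^ 2 * ‖v‖ ^ 2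
  have hψ : ∀ t, HasDerivAt ψ
      (inner ℝ (G (x + t • v)) v - inner ℝ (G x) v - L * t * ‖v‖ ^ 2) t := fun t =>
    ((((hF (x + t • v)).hasDerivAt_comp_add_smul).sub
      ((hasDerivAt_id t).mul_const _)).sub
      (((hasDerivAt_pow 2 t).const_mul (L / 2)).mul_const _)).congr_deriv (by ring)
  have hψ'_nonpos : ∀ t ∈ interior (Set.Ici (0 : ℝ)), deriv ψ t ≤ 0 := by
    intro t ht
    rw [interior_Ici, Set.mem_Ioi] at ht
    rw [(hψ t).deriv, ← inner_sub_left]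
    calc inner ℝ (G (x + t • v) - G x) v - L * t * ‖v‖ ^ 2
        ≤ ‖G (x + t • v) - G x‖ * ‖v‖ - L * t * ‖v‖ ^ 2 := by
          gcongr; exact real_inner_le_norm _ _
      _ ≤ L * (t * ‖v‖) * ‖v‖ - L * t * ‖v‖ ^ 2 := by
          gcongr
          simpa [norm_smul, abs_of_pos ht] using hG (x + t • v) x
      _ = 0 := by ring
  have hψ_anti : AntitoneOn ψ (Set.Ici 0) := antitoneOn_of_deriv_nonpos (convex_Ici 0)
    (fun t _ => (hψ t).continuousAt.continuousWithinAt)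
    (fun t _ => (hψ t).differentiableAt.differentiableWithinAt) hψ'_nonpos
  have h01 : ψ 1 ≤ ψ 0 := hψ_anti Set.self_mem_Ici (Set.mem_Ici.2 zero_le_one) zero_le_one
  simp only [ψ, v, one_smul, one_mul, zero_smul, add_zero, zero_mul, sq,
    mul_zero, sub_zero, add_sub_cancel] at h01
  linarith

end

theorem normalized_update_descent_inequality_general
    {d : ℕ}
    (F : EuclideanSpace ℝ (Fin d) → ℝ)
    (G : EuclideanSpace ℝ (Fin d) → EuclideanSpace ℝ (Fin d))
    (hF : ∀ y, HasGradientAt F (G y) y)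
    (L : ℝ)
    (hsmooth : ∀ y z, ‖G y - G z‖ ≤ L * ‖y - z‖)
    (γ : ℝ) (hγ : 0 < γ)
    (x : EuclideanSpace ℝ (Fin d))
    (g : EuclideanSpace ℝ (Fin d)) (hg : g ≠ 0)
    (Z : ℝ) (hZ : Z = 0 ∨ Z = 1)
    (xplus : EuclideanSpace ℝ (Fin d)) (hxplus : xplus = x - γ • ‖g‖⁻¹ • g)
    (e : EuclideanSpace ℝ (Fin d)) (he : e = ‖G x‖⁻¹ • G x - ‖g‖⁻¹ • g) :
    F xplus - F x ≤ -γ * (1 - 2 * Z) * ‖G x‖ + γ * (1 - Z) * ‖G x‖ * ‖e‖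
        + L * γ ^ 2 / 2 := by
  set u := ‖g‖⁻¹ • g
  have hu : ‖u‖ = 1 := norm_smul_inv_norm hg
  have hstep : F xplus - F x ≤ -γ * inner ℝ (G x) u + L * γ ^ 2 / 2 := by
    have := sub_le_inner_add_of_lipschitz_gradient hF hsmooth x xplus
    subst hxplus
    rwa [sub_sub_cancel_left, inner_neg_right, real_inner_smul_right, norm_neg, norm_smul, hu,
      mul_one, Real.norm_of_nonneg hγ.le, ← neg_mul, div_mul_eq_mul_div] at this
  rcases hZ with rfl | rfl
  · have hinner := sub_norm_mul_norm_inv_smul_sub_le_inner (G x) u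
    rw [← he] at hinner
    have := mul_le_mul_of_nonneg_left hinner hγ.le
    linarith
  · have hinner : -‖G x‖ ≤ inner ℝ (G x) u :=
      neg_le_of_abs_le ((abs_real_inner_le_norm (G x) u).trans_eq (by rw [hu, mul_one]))
    have := mul_le_mul_of_nonneg_left hinner hγ.le
    linarith

/-- Per-iteration descent inequality of the normalized update (key inequality in the
proof of Theorem 2 of the paper): for `x₊ = x - γ ĝ/‖ĝ‖`,
`F(x₊) - F(x) ≤ -γ(1-2Z)‖∇F(x)‖ + γ(1-Z)‖∇F(x)‖‖e‖ + Lγ²/2`. -/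
theorem normalized_update_descent_inequality
    {d : ℕ}
    (F : EuclideanSpace ℝ (Fin d) → ℝ)
    (G : EuclideanSpace ℝ (Fin d) → EuclideanSpace ℝ (Fin d))
    (hF : ∀ y, HasGradientAt F (G y) y)
    (L : ℝ) (hL : 0 ≤ L)
    (hsmooth : ∀ y z, ‖G y - G z‖ ≤ L * ‖y - z‖)
    (γ : ℝ) (hγ : 0 < γ)
    (x : EuclideanSpace ℝ (Fin d)) (hGx : G x ≠ 0)
    (g : EuclideanSpace ℝ (Fin d)) (hg : g ≠ 0)
    (Z : ℝ) (hZ : Z = 0 ∨ Z = 1)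
    (xplus : EuclideanSpace ℝ (Fin d)) (hxplus : xplus = x - γ • ‖g‖⁻¹ • g)
    (e : EuclideanSpace ℝ (Fin d)) (he : e = ‖G x‖⁻¹ • G x - ‖g‖⁻¹ • g) :
    F xplus - F x ≤ -γ * (1 - 2 * Z) * ‖G x‖ + γ * (1 - Z) * ‖G x‖ * ‖e‖
        + L * γ ^ 2 / 2 :=
  normalized_update_descent_inequality_general F G hF L hsmooth γ hγ x g hg Z hZ xplus hxplus e he
end
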